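/- Let C be a coalgebra and B ⊆ P a C-extension of algebras. The extension is a coalgebra-Galois extension if and only if the sequence 0 → P(Ω¹B)P → Ω¹P → P ⊗ C⁺ → 0 is exact, where the map Ω¹P → P ⊗ C⁺ is the restriction to Ω¹P of the lifted canonical map ~can : P ⊗ P → P ⊗ C, p ⊗ p' ↦ p Δ_P(p'), and C⁺ := Ker ε is the augmentation ideal of C. -/
import Mathlib


/-!
STATEMENT 1. Let C be a coalgebra and B ⊆ P a C-extension of algebras (B = P^{coC}).
The extension is a coalgebra-Galois extension if and only if the sequence
0 → P(Ω¹B)P → Ω¹P → P ⊗ C⁺ → 0 is exact, where the map Ω¹P → P ⊗ C⁺ is the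
restriction of the lifted canonical map, and C⁺ = Ker ε.
-/

open TensorProduct LinearMap

noncomputable section

namespace CGal

variable {k : Type*} [Field k]
variable {P C : Type*} [Ring P] [Algebra k P]
  [AddCommGroup C] [Module k C] [Coalgebra k C]

/-- The coaction invariants `P^{coC}`. -/
def coinv (δ : P →ₗ[k] P ⊗[k] C) : Set P :=
  {b : P | ∀ p : P, δ (b * p) = b • δ p}

/-- `δ` is a (counital, coassociative) right `C`-coaction on `P`. -/
def IsCoaction (δ : P →ₗ[k] P ⊗[k] C) : Prop :=
  (∀ p : P, (TensorProduct.rid k P) ((lTensor P (Coalgebra.counit : C →ₗ[k] k)) (δ p)) = p) ∧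
  (∀ p : P, (rTensor C δ) (δ p)
      = (TensorProduct.assoc k P C C).symm
          ((lTensor P (Coalgebra.comul : C →ₗ[k] C ⊗[k] C)) (δ p)))

/-- The submodule `P(Ω¹B)P` of `P ⊗ P` (equivalently, the kernel of
`P ⊗ P → P ⊗_B P`), for `B = P^{coC}`. -/
def galRel (δ : P →ₗ[k] P ⊗[k] C) : Submodule k (P ⊗[k] P) :=
  Submodule.span k
    {x | ∃ p b p', b ∈ coinv δ ∧ x = (p * b) ⊗ₜ[k] p' - p ⊗ₜ[k] (b * p')}

/-- The lifted canonical map `~can : P ⊗ P → P ⊗ C`, `p ⊗ p' ↦ p δ(p')`. -/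
def canLift (δ : P →ₗ[k] P ⊗[k] C) : P ⊗[k] P →ₗ[k] P ⊗[k] C :=
  (TensorProduct.map (LinearMap.mul' k P) LinearMap.id)
    ∘ₗ (TensorProduct.assoc k P P C).symm.toLinearMap
    ∘ₗ (lTensor P δ)

/-- The extension `P^{coC} ⊆ P` is coalgebra-Galois:  the canonical map
`can : P ⊗_B P → P ⊗ C` (the map induced by `canLift` on the quotient of
`P ⊗ P` by `galRel`) is bijective. -/
def IsCGalois (δ : P →ₗ[k] P ⊗[k] C) : Prop :=
  Function.Surjective (canLift δ) ∧ LinearMap.ker (canLift δ) = galRel δ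

/-- The universal 1-forms `Ω¹P = Ker (P ⊗ P → P)`. -/
def univForms : Submodule k (P ⊗[k] P) := LinearMap.ker (LinearMap.mul' k P)

/-- Auxiliary map `cEps : P ⊗ C → P`, `p ⊗ c ↦ ε(c) p`. -/
def cEps : P ⊗[k] C →ₗ[k] P :=
  (TensorProduct.rid k P).toLinearMap ∘ₗ lTensor P (Coalgebra.counit : C →ₗ[k] k)

lemma cEps_assoc (p : P) (t : P ⊗[k] C) :
    cEps ((TensorProduct.map (LinearMap.mul' k P) LinearMap.id)
      ((TensorProduct.assoc k P P C).symm (p ⊗ₜ[k] t))) = p * cEps t := by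
  induction t using TensorProduct.induction_on with
  | zero => simp
  | tmul r c => simp [cEps, mul_smul_comm]
  | add x y hx hy =>
      simp only [tmul_add, map_add, hx, hy, mul_add]

lemma cEps_canLift (δ : P →ₗ[k] P ⊗[k] C) (hδ : IsCoaction δ) :
    cEps ∘ₗ canLift δ = LinearMap.mul' k P := by
  apply TensorProduct.ext'
  intro p q
  have h1 : (lTensor P δ) (p ⊗ₜ[k] q) = p ⊗ₜ[k] δ q := rfl
  simp only [canLift, coe_comp, Function.comp_apply, LinearEquiv.coe_coe, h1, cEps_assoc,
    mul'_apply]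
  congr 1
  exact hδ.1 q

lemma mul'_eq (δ : P →ₗ[k] P ⊗[k] C) (hδ : IsCoaction δ) (x : P ⊗[k] P) :
    LinearMap.mul' k P x = cEps (canLift δ x) := by
  rw [← cEps_canLift δ hδ]; rfl

lemma ker_cEps :
    LinearMap.ker (cEps : P ⊗[k] C →ₗ[k] P)
      = LinearMap.range (lTensor P (LinearMap.ker (Coalgebra.counit : C →ₗ[k] k)).subtype) := by
  have h1 : LinearMap.ker (cEps : P ⊗[k] C →ₗ[k] P)
      = LinearMap.ker (lTensor P (Coalgebra.counit : C →ₗ[k] k)) := by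
    rw [cEps, LinearMap.ker_comp, LinearEquiv.ker, Submodule.comap_bot]
  have hex : Function.Exact
      (LinearMap.ker (Coalgebra.counit : C →ₗ[k] k)).subtype
      (Coalgebra.counit : C →ₗ[k] k) :=
    LinearMap.exact_iff.mpr (Submodule.range_subtype _).symm
  have := Module.Flat.lTensor_exact (R := k) P hex
  rw [h1, LinearMap.exact_iff.mp this]

omit [Coalgebra k C] in
lemma galRel_le_univForms (δ : P →ₗ[k] P ⊗[k] C) :
    galRel δ ≤ (univForms : Submodule k (P ⊗[k] P)) := by
  rw [galRel, Submodule.span_le]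
  rintro x ⟨p, b, p', -, rfl⟩
  simp [univForms, LinearMap.mem_ker, mul_assoc]

lemma ker_canLift_le_univForms (δ : P →ₗ[k] P ⊗[k] C) (hδ : IsCoaction δ) :
    LinearMap.ker (canLift δ) ≤ (univForms : Submodule k (P ⊗[k] P)) := by
  intro x hx
  simp only [LinearMap.mem_ker] at hx
  simp [univForms, LinearMap.mem_ker, mul'_eq δ hδ, hx]

theorem galois_iff_exact_sequence
    (δ : P →ₗ[k] P ⊗[k] C) (hδ : IsCoaction δ) :
    IsCGalois δ ↔
      ((∀ x ∈ (univForms : Submodule k (P ⊗[k] P)),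
          (canLift δ x = 0 ↔ x ∈ galRel δ)) ∧
       Submodule.map (canLift δ) (univForms : Submodule k (P ⊗[k] P))
          = LinearMap.range
              (lTensor P (LinearMap.ker (Coalgebra.counit : C →ₗ[k] k)).subtype)) := by
  rw [← ker_cEps]
  constructor
  · rintro ⟨hsurj, hker⟩
    refine ⟨fun x _ => by rw [← hker]; rfl, ?_⟩
    apply le_antisymm
    · rintro y ⟨x, hx, rfl⟩
      simp only [LinearMap.mem_ker] at hx ⊢
      rw [← mul'_eq δ hδ]
      exact hx
    · intro y hy
      obtain ⟨x, rfl⟩ := hsurj y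
      refine ⟨x, ?_, rfl⟩
      show x ∈ LinearMap.ker (LinearMap.mul' k P)
      rw [LinearMap.mem_ker, mul'_eq δ hδ]
      exact LinearMap.mem_ker.mp hy
  · rintro ⟨h1, h2⟩
    have hsurj : Function.Surjective (canLift δ) := by
      intro y
      have hy0 : y - canLift δ (cEps y ⊗ₜ[k] (1 : P))
          ∈ LinearMap.ker (cEps : P ⊗[k] C →ₗ[k] P) := by
        simp only [LinearMap.mem_ker, map_sub, ← mul'_eq δ hδ, mul'_apply, mul_one, sub_self]
      rw [← h2] at hy0
      obtain ⟨x, -, hx⟩ := hy0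
      exact ⟨x + cEps y ⊗ₜ[k] (1 : P), by rw [map_add, hx]; abel⟩
    refine ⟨hsurj, le_antisymm ?_ ?_⟩
    · intro x hx
      exact (h1 x (ker_canLift_le_univForms δ hδ hx)).mp hx
    · intro x hx
      exact LinearMap.mem_ker.mpr ((h1 x (galRel_le_univForms δ hx)).mpr hx)

end CGal
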